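/- Let $k$ be a field and $F \in k[u,t]$ a polynomial such that: (1) $F$ is monic as a polynomial in $t$; (2) the leading coefficient of $F$, viewed as a polynomial in $u$ with coefficients in $k[t]$, is irreducible in $k[t]$; (3) there exist $\alpha, \beta \in k$ with $\beta \neq 0$ and $F(u, \alpha) = \beta$ (i.e., substituting $t = \alpha$ yields the nonzero constant $\beta$). Then $F$ is irreducible in $k(u)[t]$. -/
import Mathlib

open Polynomial

/-- For `F ∈ k[u][t]` (inner variable `u`, outer variable `t`), `polySwap F` is
the same bivariate polynomial viewed in `k[t][u]` (inner variable `t`, outer `u`). -/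
noncomputable def polySwap {k : Type*} [CommSemiring k] (F : Polynomial (Polynomial k)) :
    Polynomial (Polynomial k) :=
  Polynomial.eval₂ (Polynomial.mapRingHom (Polynomial.C : k →+* Polynomial k))
    (Polynomial.C Polynomial.X) F

/-- `polySwap` as a ring homomorphism. -/
noncomputable def polySwapHom (k : Type*) [CommSemiring k] :
    Polynomial (Polynomial k) →+* Polynomial (Polynomial k) :=
  Polynomial.eval₂RingHom (Polynomial.mapRingHom (Polynomial.C : k →+* Polynomial k))
    (Polynomial.C Polynomial.X)

lemma polySwapHom_apply {k : Type*} [CommSemiring k] (F : Polynomial (Polynomial k)) :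
    polySwapHom k F = polySwap F := rfl

lemma polySwapHom_comp_self {k : Type*} [CommSemiring k] :
    (polySwapHom k).comp (polySwapHom k) = RingHom.id _ := by
  apply Polynomial.ringHom_ext
  · intro p
    have : ((polySwapHom k).comp (polySwapHom k)).comp
        (Polynomial.C : Polynomial k →+* Polynomial (Polynomial k)) =
        (RingHom.id _).comp (Polynomial.C) := by
      apply Polynomial.ringHom_ext
      · intro a
        simp [polySwapHom, Polynomial.eval₂_C]
      · simp [polySwapHom, Polynomial.eval₂_C, Polynomial.eval₂_X]
    exact RingHom.congr_fun this p
  · simp [polySwapHom, Polynomial.eval₂_X, Polynomial.eval₂_C]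

lemma polySwap_polySwap {k : Type*} [CommSemiring k] (F : Polynomial (Polynomial k)) :
    polySwap (polySwap F) = F := by
  have := RingHom.congr_fun (polySwapHom_comp_self (k := k)) F
  simpa [polySwapHom_apply] using this

lemma polySwap_map_eval {k : Type*} [CommSemiring k] (α : k) (G : Polynomial (Polynomial k)) :
    (polySwap G).map (Polynomial.evalRingHom α) = G.eval (Polynomial.C α) := by
  have : (Polynomial.mapRingHom (Polynomial.evalRingHom α)).comp (polySwapHom k) =
      Polynomial.evalRingHom (Polynomial.C α) := by
    apply Polynomial.ringHom_ext
    · intro p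
      have h2 : ((Polynomial.mapRingHom (Polynomial.evalRingHom α)).comp
          (polySwapHom k)).comp (Polynomial.C : Polynomial k →+* Polynomial (Polynomial k)) =
          (Polynomial.evalRingHom (Polynomial.C α)).comp Polynomial.C := by
        apply Polynomial.ringHom_ext
        · intro a
          simp [polySwapHom, Polynomial.eval₂_C]
        · simp [polySwapHom, Polynomial.eval₂_C, Polynomial.eval₂_X]
      exact RingHom.congr_fun h2 p
    · simp [polySwapHom, Polynomial.eval₂_X]
  exact RingHom.congr_fun this G

/-- Key lemma: if the leading coefficient (in `u`) of `G` is a unit and `G(u,α)` is a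
unit of `k[u]`, then `G` itself is a unit. -/
lemma isUnit_of_swap_leadingCoeff {k : Type*} [Field k] (α : k) (G : Polynomial (Polynomial k))
    (hlc : IsUnit (polySwap G).leadingCoeff)
    (hev : IsUnit (G.eval (Polynomial.C α))) : IsUnit G := by
  obtain ⟨c, hc, hcc⟩ := Polynomial.isUnit_iff.mp hlc
  by_cases hd : (polySwap G).natDegree = 0
  · have h0 : polySwap G = Polynomial.C ((polySwap G).coeff 0) :=
      Polynomial.eq_C_of_natDegree_eq_zero hd
    have hlc0 : (polySwap G).leadingCoeff = (polySwap G).coeff 0 := by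
      rw [Polynomial.leadingCoeff, hd]
    have hG : G = Polynomial.C (Polynomial.C c) := by
      have := polySwap_polySwap G
      rw [h0] at this
      rw [← this, ← hlc0, ← hcc]
      simp [polySwap, Polynomial.eval₂_C]
    rw [hG]
    exact (hc.map (Polynomial.C : k →+* Polynomial k)).map
      (Polynomial.C : Polynomial k →+* Polynomial (Polynomial k))
  · exfalso
    set d := (polySwap G).natDegree with hdd
    have hcne : c ≠ 0 := hc.ne_zero
    have hcoeff : (G.eval (Polynomial.C α)).coeff d = c := by
      rw [← polySwap_map_eval α G, Polynomial.coeff_map]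
      have : (polySwap G).coeff d = Polynomial.C c := by
        rw [hcc]; rfl
      rw [this]
      simp
    have hdeg : (G.eval (Polynomial.C α)).natDegree = 0 :=
      Polynomial.natDegree_eq_zero_of_isUnit hev
    have : (G.eval (Polynomial.C α)).coeff d = 0 :=
      Polynomial.coeff_eq_zero_of_natDegree_lt (by omega)
    rw [hcoeff] at this
    exact hcne this

/-- if `F ∈ k[u][t]` is monic in `t`, its leading coefficient as a
polynomial in `u` is irreducible in `k[t]`, and `F(u,α) = β ≠ 0` for some `α β ∈ k`,
then `F` is irreducible in `k(u)[t]`. -/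
theorem stmt_0 {k : Type*} [Field k] (F : Polynomial (Polynomial k))
    (h1 : F.Monic)
    (h2 : Irreducible (polySwap F).leadingCoeff)
    (α β : k) (hβ : β ≠ 0)
    (h3 : F.eval (Polynomial.C α) = Polynomial.C β) :
    Irreducible (F.map (algebraMap (Polynomial k) (RatFunc k))) := by
  rw [← h1.irreducible_iff_irreducible_map_fraction_map]
  constructor
  · intro hu
    have hus : IsUnit (polySwap F) := by
      rw [← polySwapHom_apply]; exact hu.map (polySwapHom k)
    obtain ⟨r, hr, hrp⟩ := Polynomial.isUnit_iff.mp hus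
    apply h2.not_isUnit
    rw [← hrp, Polynomial.leadingCoeff_C]
    exact hr
  · rintro G H hF
    have hevGH : G.eval (Polynomial.C α) * H.eval (Polynomial.C α) = Polynomial.C β := by
      rw [← Polynomial.eval_mul, ← hF, h3]
    have hβu : IsUnit (Polynomial.C β : Polynomial k) :=
      Polynomial.isUnit_C.mpr hβ.isUnit
    have hevG : IsUnit (G.eval (Polynomial.C α)) :=
      isUnit_of_mul_isUnit_left (hevGH ▸ hβu)
    have hevH : IsUnit (H.eval (Polynomial.C α)) :=
      isUnit_of_mul_isUnit_right (hevGH ▸ hβu)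
    have hlcmul : (polySwap F).leadingCoeff =
        (polySwap G).leadingCoeff * (polySwap H).leadingCoeff := by
      have : polySwap F = polySwap G * polySwap H := by
        rw [hF, ← polySwapHom_apply, ← polySwapHom_apply, ← polySwapHom_apply, map_mul]
      rw [this, Polynomial.leadingCoeff_mul]
    rcases h2.isUnit_or_isUnit hlcmul with h | h
    · exact Or.inl (isUnit_of_swap_leadingCoeff α G h hevG)
    · exact Or.inr (isUnit_of_swap_leadingCoeff α H h hevH)
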